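/- Let N ≥ 1 and let B : ℝ^N × ℝ^N → ℝ be a twice continuously differentiable function of (q, p). On the phase space with configuration variables (q, p) ∈ ℝ^N × ℝ^N and conjugate momenta (π_q, π_p), define δ_i := π_{q^i} − π_{p_i} − q^i + ∂B/∂q^i − ∂B/∂p_i (the redefined constraints of the system with original first-class constraints γ_i = p_i − q_i). Then {δ_i, δ_j} = 0 for all i, j; the constraints δ_i form a first-class abelian set, for every choice of the boundary function B. -/

import Mathlib

/-- The canonical Poisson bracket on the phase space `ℝⁿ × ℝⁿ` with coordinates `(xᵘ; πᵤ)`: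
`{f, g} = ∑ᵤ (∂f/∂xᵘ · ∂g/∂πᵤ − ∂f/∂πᵤ · ∂g/∂xᵘ)`. -/
noncomputable def poissonBracket {ι : Type*} [Fintype ι] [DecidableEq ι]
    (f g : ((ι → ℝ) × (ι → ℝ)) → ℝ) (z : (ι → ℝ) × (ι → ℝ)) : ℝ :=
  ∑ μ, (fderiv ℝ f z (Pi.single μ 1, 0) * fderiv ℝ g z (0, Pi.single μ 1)
      - fderiv ℝ f z (0, Pi.single μ 1) * fderiv ℝ g z (Pi.single μ 1, 0))

/-- The `q`-part of an enlarged configuration `x : (Fin N ⊕ Fin N) → ℝ`. -/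
def qOf (N : ℕ) (x : (Fin N ⊕ Fin N) → ℝ) : Fin N → ℝ := fun i => x (Sum.inl i)

/-- The `p`-part of an enlarged configuration `x : (Fin N ⊕ Fin N) → ℝ`. -/
def pOf (N : ℕ) (x : (Fin N ⊕ Fin N) → ℝ) : Fin N → ℝ := fun i => x (Sum.inr i)

/-- The redefined constraints `δᵢ = π_{qⁱ} − π_{pᵢ} − qⁱ + ∂B/∂qⁱ − ∂B/∂pᵢ` of the system with
original first-class constraints `γᵢ = pᵢ − qᵢ`, after adding the boundary term `B(q, p)`. -/
noncomputable def deltaC (N : ℕ) (B : (Fin N → ℝ) × (Fin N → ℝ) → ℝ) (i : Fin N) :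
    ((Fin N ⊕ Fin N) → ℝ) × ((Fin N ⊕ Fin N) → ℝ) → ℝ :=
  fun z => z.2 (Sum.inl i) - z.2 (Sum.inr i) - z.1 (Sum.inl i)
    + fderiv ℝ B (qOf N z.1, pOf N z.1) (Pi.single i 1, 0)
    - fderiv ℝ B (qOf N z.1, pOf N z.1) (0, Pi.single i 1)

/-- The linear projection from the enlarged configuration space to `(q, p)`. -/
noncomputable def Lmap (N : ℕ) : ((Fin N ⊕ Fin N) → ℝ) →L[ℝ] (Fin N → ℝ) × (Fin N → ℝ) :=
  (ContinuousLinearMap.pi fun i => ContinuousLinearMap.proj (Sum.inl i)).prod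
    (ContinuousLinearMap.pi fun i => ContinuousLinearMap.proj (Sum.inr i))

lemma Lmap_apply (N : ℕ) (x : (Fin N ⊕ Fin N) → ℝ) :
    Lmap N x = (qOf N x, pOf N x) := rfl

lemma sum_mul_single {N : ℕ} (f : Fin N → ℝ) (m : Fin N) :
    ∑ k, f k * (Pi.single k 1 : Fin N → ℝ) m = f m := by
  simp [Pi.single_apply, mul_ite, Finset.sum_ite_eq]

/-- For every twice continuously differentiable boundary function `B(q, p)`, the
redefined constraints `δᵢ = π_{qⁱ} − π_{pᵢ} − qⁱ + ∂B/∂qⁱ − ∂B/∂pᵢ` satisfy `{δᵢ, δⱼ} = 0` for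
all `i, j`: they form a first-class abelian set, for every choice of `B`. -/
theorem delta_constraints_abelian
    (N : ℕ) (hN : 1 ≤ N)
    (B : (Fin N → ℝ) × (Fin N → ℝ) → ℝ) (hB : ContDiff ℝ 2 B) :
    ∀ (i j : Fin N) (z : ((Fin N ⊕ Fin N) → ℝ) × ((Fin N ⊕ Fin N) → ℝ)),
      poissonBracket (deltaC N B i) (deltaC N B j) z = 0 := by
  intro i j z
  set g : (Fin N → ℝ) × (Fin N → ℝ) → ((Fin N → ℝ) × (Fin N → ℝ) →L[ℝ] ℝ) := fderiv ℝ B with hg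
  have hB1 : Differentiable ℝ B := hB.differentiable (by norm_num)
  have hg1 : ContDiff ℝ 1 g := hB.fderiv_right (by norm_num)
  have hgd : Differentiable ℝ g := hg1.differentiable (by norm_num)
  -- a general formula for the derivative of `deltaC N B i`
  have key : ∀ (i : Fin N)
      (u : ((Fin N ⊕ Fin N) → ℝ) × ((Fin N ⊕ Fin N) → ℝ)),
      fderiv ℝ (deltaC N B i) z u =
        u.2 (Sum.inl i) - u.2 (Sum.inr i) - u.1 (Sum.inl i)
          + fderiv ℝ g (Lmap N z.1) (Lmap N u.1)
              (((Pi.single i 1 : Fin N → ℝ), (0 : Fin N → ℝ))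
                - ((0 : Fin N → ℝ), (Pi.single i 1 : Fin N → ℝ))) := by
    intro i u
    set w : (Fin N → ℝ) × (Fin N → ℝ) := ((Pi.single i 1 : Fin N → ℝ), (0 : Fin N → ℝ))
        - ((0 : Fin N → ℝ), (Pi.single i 1 : Fin N → ℝ)) with hw
    have hdelta : deltaC N B i = fun z => (z.2 (Sum.inl i) - z.2 (Sum.inr i)
        - z.1 (Sum.inl i)) + g (Lmap N z.1) w := by
      funext z
      simp only [deltaC, hw, Lmap_apply, map_sub, hg]
      ring
    set ℓ : (((Fin N ⊕ Fin N) → ℝ) × ((Fin N ⊕ Fin N) → ℝ)) →L[ℝ] ℝ :=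
      ((ContinuousLinearMap.proj (R := ℝ) (φ := fun _ : Fin N ⊕ Fin N => ℝ) (Sum.inl i)).comp
          (ContinuousLinearMap.snd ℝ ((Fin N ⊕ Fin N) → ℝ) ((Fin N ⊕ Fin N) → ℝ)))
        - ((ContinuousLinearMap.proj (R := ℝ) (φ := fun _ : Fin N ⊕ Fin N => ℝ) (Sum.inr i)).comp
          (ContinuousLinearMap.snd ℝ ((Fin N ⊕ Fin N) → ℝ) ((Fin N ⊕ Fin N) → ℝ)))
        - ((ContinuousLinearMap.proj (R := ℝ) (φ := fun _ : Fin N ⊕ Fin N => ℝ) (Sum.inl i)).comp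
          (ContinuousLinearMap.fst ℝ ((Fin N ⊕ Fin N) → ℝ) ((Fin N ⊕ Fin N) → ℝ))) with hℓ
    have hψ : HasFDerivAt (fun y : (Fin N → ℝ) × (Fin N → ℝ) => g y w)
        ((fderiv ℝ g (Lmap N z.1)).flip w) (Lmap N z.1) := by
      have := (hgd (Lmap N z.1)).hasFDerivAt.clm_apply (hasFDerivAt_const w (Lmap N z.1))
      simpa using this
    have hL : HasFDerivAt
        (fun z : ((Fin N ⊕ Fin N) → ℝ) × ((Fin N ⊕ Fin N) → ℝ) => Lmap N z.1)
        ((Lmap N).comp (ContinuousLinearMap.fst ℝ _ _)) z :=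
      (Lmap N).hasFDerivAt.comp z hasFDerivAt_fst
    have hΦ : HasFDerivAt
        (fun z : ((Fin N ⊕ Fin N) → ℝ) × ((Fin N ⊕ Fin N) → ℝ) => g (Lmap N z.1) w)
        (((fderiv ℝ g (Lmap N z.1)).flip w).comp
          ((Lmap N).comp (ContinuousLinearMap.fst ℝ _ _))) z :=
      by have := hψ.comp z hL; exact this
    have htot : HasFDerivAt (deltaC N B i)
        (ℓ + ((fderiv ℝ g (Lmap N z.1)).flip w).comp
          ((Lmap N).comp (ContinuousLinearMap.fst ℝ _ _))) z := by
      rw [hdelta]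
      exact ℓ.hasFDerivAt.add hΦ
    rw [htot.fderiv]
    simp [hℓ, hw]
  -- images of basis vectors under `Lmap`
  have Lsingle_inl : ∀ k : Fin N, Lmap N (Pi.single (Sum.inl k) 1) =
      ((Pi.single k 1 : Fin N → ℝ), (0 : Fin N → ℝ)) := by
    intro k
    refine Prod.ext ?_ ?_ <;> funext m <;>
      simp [Lmap_apply, qOf, pOf, Pi.single_apply]
  have Lsingle_inr : ∀ k : Fin N, Lmap N (Pi.single (Sum.inr k) 1) =
      ((0 : Fin N → ℝ), (Pi.single k 1 : Fin N → ℝ)) := by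
    intro k
    refine Prod.ext ?_ ?_ <;> funext m <;>
      simp [Lmap_apply, qOf, pOf, Pi.single_apply]
  set H : ((Fin N → ℝ) × (Fin N → ℝ)) →L[ℝ] (((Fin N → ℝ) × (Fin N → ℝ)) →L[ℝ] ℝ) := fderiv ℝ g (Lmap N z.1) with hH
  have hsymm : ∀ v w : (Fin N → ℝ) × (Fin N → ℝ), H v w = H w v := fun v w =>
    second_derivative_symmetric (f := B) (fun y => (hB1 y).hasFDerivAt)
      (hgd (Lmap N z.1)).hasFDerivAt v w
  set wi : (Fin N → ℝ) × (Fin N → ℝ) := ((Pi.single i 1 : Fin N → ℝ), (0 : Fin N → ℝ))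
      - ((0 : Fin N → ℝ), (Pi.single i 1 : Fin N → ℝ)) with hwi
  set wj : (Fin N → ℝ) × (Fin N → ℝ) := ((Pi.single j 1 : Fin N → ℝ), (0 : Fin N → ℝ))
      - ((0 : Fin N → ℝ), (Pi.single j 1 : Fin N → ℝ)) with hwj
  -- values of the derivatives on the basis directions
  have Dinl : ∀ (a : Fin N) (wa : (Fin N → ℝ) × (Fin N → ℝ)) (_ : wa = ((Pi.single a 1 : Fin N → ℝ), (0 : Fin N → ℝ))
      - ((0 : Fin N → ℝ), (Pi.single a 1 : Fin N → ℝ))) (k : Fin N),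
      fderiv ℝ (deltaC N B a) z (Pi.single (Sum.inl k) 1, 0) =
        -(Pi.single k 1 : Fin N → ℝ) a + H ((Pi.single k 1 : Fin N → ℝ), (0 : Fin N → ℝ)) wa := by
    intro a wa hwa k
    rw [key, hwa]
    simp [Lsingle_inl, Pi.single_apply, eq_comm]
  have Dinr : ∀ (a : Fin N) (wa : (Fin N → ℝ) × (Fin N → ℝ)) (_ : wa = ((Pi.single a 1 : Fin N → ℝ), (0 : Fin N → ℝ))
      - ((0 : Fin N → ℝ), (Pi.single a 1 : Fin N → ℝ))) (k : Fin N),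
      fderiv ℝ (deltaC N B a) z (Pi.single (Sum.inr k) 1, 0) =
        H ((0 : Fin N → ℝ), (Pi.single k 1 : Fin N → ℝ)) wa := by
    intro a wa hwa k
    rw [key, hwa]
    simp [Lsingle_inr, Pi.single_apply]
  have Pinl : ∀ (a k : Fin N),
      fderiv ℝ (deltaC N B a) z (0, Pi.single (Sum.inl k) 1) = (Pi.single k 1 : Fin N → ℝ) a := by
    intro a k
    rw [key]
    simp [Pi.single_apply, eq_comm]
  have Pinr : ∀ (a k : Fin N),
      fderiv ℝ (deltaC N B a) z (0, Pi.single (Sum.inr k) 1) = -(Pi.single k 1 : Fin N → ℝ) a := by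
    intro a k
    rw [key]
    simp [Pi.single_apply, eq_comm]
  rw [poissonBracket, Fintype.sum_sum_type]
  have S1 : ∑ k : Fin N,
      (fderiv ℝ (deltaC N B i) z (Pi.single (Sum.inl k) 1, 0) *
          fderiv ℝ (deltaC N B j) z (0, Pi.single (Sum.inl k) 1)
        - fderiv ℝ (deltaC N B i) z (0, Pi.single (Sum.inl k) 1) *
          fderiv ℝ (deltaC N B j) z (Pi.single (Sum.inl k) 1, 0)) =
      H ((Pi.single j 1 : Fin N → ℝ), (0 : Fin N → ℝ)) wi
        - H ((Pi.single i 1 : Fin N → ℝ), (0 : Fin N → ℝ)) wj := by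
    have step : ∀ k : Fin N,
        (fderiv ℝ (deltaC N B i) z (Pi.single (Sum.inl k) 1, 0) *
            fderiv ℝ (deltaC N B j) z (0, Pi.single (Sum.inl k) 1)
          - fderiv ℝ (deltaC N B i) z (0, Pi.single (Sum.inl k) 1) *
            fderiv ℝ (deltaC N B j) z (Pi.single (Sum.inl k) 1, 0)) =
        H ((Pi.single k 1 : Fin N → ℝ), (0 : Fin N → ℝ)) wi * (Pi.single k 1 : Fin N → ℝ) j
          - H ((Pi.single k 1 : Fin N → ℝ), (0 : Fin N → ℝ)) wj * (Pi.single k 1 : Fin N → ℝ) i := by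
      intro k
      rw [Dinl i wi hwi k, Dinl j wj hwj k, Pinl, Pinl]
      ring
    rw [Finset.sum_congr rfl fun k _ => step k, Finset.sum_sub_distrib,
      sum_mul_single, sum_mul_single]
  have S2 : ∑ k : Fin N,
      (fderiv ℝ (deltaC N B i) z (Pi.single (Sum.inr k) 1, 0) *
          fderiv ℝ (deltaC N B j) z (0, Pi.single (Sum.inr k) 1)
        - fderiv ℝ (deltaC N B i) z (0, Pi.single (Sum.inr k) 1) *
          fderiv ℝ (deltaC N B j) z (Pi.single (Sum.inr k) 1, 0)) =
      - H ((0 : Fin N → ℝ), (Pi.single j 1 : Fin N → ℝ)) wi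
        + H ((0 : Fin N → ℝ), (Pi.single i 1 : Fin N → ℝ)) wj := by
    have step : ∀ k : Fin N,
        (fderiv ℝ (deltaC N B i) z (Pi.single (Sum.inr k) 1, 0) *
            fderiv ℝ (deltaC N B j) z (0, Pi.single (Sum.inr k) 1)
          - fderiv ℝ (deltaC N B i) z (0, Pi.single (Sum.inr k) 1) *
            fderiv ℝ (deltaC N B j) z (Pi.single (Sum.inr k) 1, 0)) =
        (-(H ((0 : Fin N → ℝ), (Pi.single k 1 : Fin N → ℝ)) wi)) * (Pi.single k 1 : Fin N → ℝ) j
          - (-(H ((0 : Fin N → ℝ), (Pi.single k 1 : Fin N → ℝ)) wj)) * (Pi.single k 1 : Fin N → ℝ) i := by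
      intro k
      rw [Dinr i wi hwi k, Dinr j wj hwj k, Pinr, Pinr]
      ring
    rw [Finset.sum_congr rfl fun k _ => step k, Finset.sum_sub_distrib,
      sum_mul_single, sum_mul_single]
    ring
  rw [S1, S2]
  have hji : H wj wi = H ((Pi.single j 1 : Fin N → ℝ), (0 : Fin N → ℝ)) wi
      - H ((0 : Fin N → ℝ), (Pi.single j 1 : Fin N → ℝ)) wi := by
    simp only [hwj, hwi, map_sub, ContinuousLinearMap.sub_apply]
    ring
  have hij : H wi wj = H ((Pi.single i 1 : Fin N → ℝ), (0 : Fin N → ℝ)) wj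
      - H ((0 : Fin N → ℝ), (Pi.single i 1 : Fin N → ℝ)) wj := by
    simp only [hwj, hwi, map_sub, ContinuousLinearMap.sub_apply]
    ring
  have := hsymm wi wj
  linarith [hsymm wi wj, hji, hij]
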